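/- For every y ∈ ℤ[1/p] there exists a rational number x ∈ ℚ such that f(x) = y. -/

import Mathlib

open scoped Classical in
noncomputable def eps {p : ℕ} [Fact p.Prime] (x : ℚ_[p]) : ℚ_[p] :=
  if x = 0 then 1 else (p : ℚ_[p]) ^ (-x.valuation) * x

noncomputable def fdigit {p : ℕ} [Fact p.Prime] (x : ℚ_[p]) : ℕ :=
  if h : ‖x‖ ≤ 1 then ((PadicInt.toZMod (⟨x, h⟩ : ℤ_[p])).val) else 0

noncomputable def tau {p : ℕ} [Fact p.Prime] (x : ℚ_[p]) : ℚ_[p] :=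
  1 / eps x - (fdigit (1 / eps x) : ℚ_[p])

noncomputable def sigma {p : ℕ} [Fact p.Prime] (x : ℚ_[p]) : ℚ_[p] :=
  eps x - (fdigit (eps x) : ℚ_[p])

/-- `f(x) = Σ_{n=0}^∞ ⌊1/ε(τⁿ x)⌋_p ∏_{m=0}^n τᵐ x / ε(τᵐ x)` -/
noncomputable def schneiderF {p : ℕ} [Fact p.Prime] (x : ℚ_[p]) : ℚ_[p] :=
  ∑' n : ℕ, (fdigit (1 / eps (tau^[n] x)) : ℚ_[p]) *
    ∏ m ∈ Finset.range (n + 1), (tau^[m] x) / eps (tau^[m] x)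

/-- Finite continued fraction `b 0 / (a 0 + b 1 / (a 1 + ⋯ + b n / (a n + x)))`. -/
noncomputable def cf {p : ℕ} [Fact p.Prime] : (ℕ → ℚ_[p]) → (ℕ → ℚ_[p]) → ℕ → ℚ_[p] → ℚ_[p]
  | a, b, 0, x => b 0 / (a 0 + x)
  | a, b, n + 1, x => b 0 / (a 0 + cf (fun i => a (i + 1)) (fun i => b (i + 1)) n x)

section Aux
variable {p : ℕ} [hp : Fact p.Prime]

noncomputable def sF (x : ℚ_[p]) (n : ℕ) : ℚ_[p] :=
  (fdigit (1 / eps (tau^[n] x)) : ℚ_[p]) *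
    ∏ m ∈ Finset.range (n + 1), (tau^[m] x) / eps (tau^[m] x)

lemma p_posR : (0:ℝ) < p := by exact_mod_cast hp.1.pos
lemma one_lt_pR : (1:ℝ) < p := by exact_mod_cast hp.1.one_lt
lemma hpQ : (p:ℚ_[p]) ≠ 0 := Nat.cast_ne_zero.mpr hp.1.pos.ne'
lemma inv_p_lt_one : (p:ℝ)⁻¹ < 1 := inv_lt_one_of_one_lt₀ one_lt_pR

lemma val_eq_of_norm {x : ℚ_[p]} (hx : x ≠ 0) {v : ℤ} (h : ‖x‖ = (p:ℝ)^(-v)) :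
    x.valuation = v := by
  rw [Padic.norm_eq_zpow_neg_valuation hx] at h
  have := zpow_right_injective₀ p_posR (ne_of_gt one_lt_pR) h
  omega

lemma eps_def {x : ℚ_[p]} (hx : x ≠ 0) : eps x = (p:ℚ_[p]) ^ (-x.valuation) * x := by
  simp [eps, hx]

lemma eps_zero : eps (0:ℚ_[p]) = 1 := by simp [eps]

lemma norm_unit_add (d : ℕ) (hd1 : 1 ≤ d) (hdp : d < p) {t : ℚ_[p]} (ht : ‖t‖ ≤ (p:ℝ)⁻¹) :
    ‖(d : ℚ_[p]) + t‖ = 1 := by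
  have hpd : ¬ ((p:ℤ) ∣ (d:ℤ)) := by
    rw [Int.natCast_dvd_natCast]
    intro h
    exact absurd (Nat.le_of_dvd (by omega) h) (by omega)
  have hd : ‖((d:ℤ) : ℚ_[p])‖ = 1 := by
    have h1 := Padic.norm_int_le_one (p := p) d
    have h2 : ¬ ‖((d:ℤ):ℚ_[p])‖ < 1 := fun h => hpd (Padic.norm_intCast_lt_one_iff.mp h)
    linarith [lt_or_eq_of_le h1]
  have hd' : ‖(d : ℚ_[p])‖ = 1 := by rwa [Int.cast_natCast] at hd
  have htlt : ‖t‖ < 1 := lt_of_le_of_lt ht inv_p_lt_one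
  have hne : ‖(d : ℚ_[p])‖ ≠ ‖t‖ := by rw [hd']; exact ne_of_gt htlt
  rw [Padic.add_eq_max_of_ne hne, hd']
  exact max_eq_left htlt.le

lemma step_facts (d : ℕ) (hd1 : 1 ≤ d) (hdp : d < p) (v : ℤ) {t : ℚ_[p]} (ht : ‖t‖ ≤ (p:ℝ)⁻¹) :
    ‖(p:ℚ_[p]) ^ v / ((d:ℚ_[p]) + t)‖ = (p:ℝ) ^ (-v) ∧
      (p:ℚ_[p]) ^ v / ((d:ℚ_[p]) + t) ≠ 0 ∧
      ((p:ℚ_[p]) ^ v / ((d:ℚ_[p]) + t)) / eps ((p:ℚ_[p]) ^ v / ((d:ℚ_[p]) + t)) = (p:ℚ_[p]) ^ v ∧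
      fdigit (1 / eps ((p:ℚ_[p]) ^ v / ((d:ℚ_[p]) + t))) = d ∧
      tau ((p:ℚ_[p]) ^ v / ((d:ℚ_[p]) + t)) = t := by
  set x := (p:ℚ_[p]) ^ v / ((d:ℚ_[p]) + t) with hxdef
  have hu : ‖(d:ℚ_[p]) + t‖ = 1 := norm_unit_add d hd1 hdp ht
  have hu0 : (d:ℚ_[p]) + t ≠ 0 := by intro h; rw [h] at hu; simp at hu
  have hx0 : x ≠ 0 := div_ne_zero (zpow_ne_zero _ hpQ) hu0
  have hxn : ‖x‖ = (p:ℝ)^(-v) := by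
    rw [hxdef, norm_div, Padic.norm_p_zpow, hu, div_one]
  have hval := val_eq_of_norm hx0 hxn
  have heps : eps x = ((d:ℚ_[p]) + t)⁻¹ := by
    rw [eps_def hx0, hval, hxdef, zpow_neg, div_eq_mul_inv, ← mul_assoc,
      inv_mul_cancel₀ (zpow_ne_zero _ hpQ), one_mul]
  have h1e : 1 / eps x = (d:ℚ_[p]) + t := by rw [heps, one_div, inv_inv]
  have hxe : x / eps x = (p:ℚ_[p]) ^ v := by
    rw [heps, div_eq_mul_inv, inv_inv, hxdef, div_mul_cancel₀ _ hu0]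
  have htle : ‖t‖ ≤ 1 := le_trans ht inv_p_lt_one.le
  have hfd : fdigit ((d:ℚ_[p]) + t) = d := by
    rw [fdigit, dif_pos (le_of_eq hu)]
    have hsub : @Eq ℤ_[p] ⟨(d:ℚ_[p]) + t, le_of_eq hu⟩ (@HAdd.hAdd ℤ_[p] ℤ_[p] ℤ_[p] _ (d : ℤ_[p]) ⟨t, htle⟩) := by
      rfl
    rw [hsub]
    erw [map_add, map_natCast]
    have ht0 : PadicInt.toZMod (⟨t, htle⟩ : ℤ_[p]) = 0 := by
      set z : ℤ_[p] := ⟨t, htle⟩ with hz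
      rw [← RingHom.mem_ker, PadicInt.ker_toZMod, PadicInt.maximalIdeal_eq_span_p,
        Ideal.mem_span_singleton, ← PadicInt.norm_lt_one_iff_dvd, PadicInt.norm_def]
      exact lt_of_le_of_lt ht inv_p_lt_one
    rw [ht0, add_zero, ZMod.val_natCast_of_lt hdp]
  have htau : tau x = t := by
    rw [tau, h1e, hfd]; ring
  exact ⟨hxn, hx0, hxe, by rw [h1e]; exact hfd, htau⟩

noncomputable def schneiderF' {p : ℕ} [Fact p.Prime] (x : ℚ_[p]) : ℚ_[p] := ∑' n, sF x n

lemma sF_succ (x : ℚ_[p]) (n : ℕ) : sF x (n + 1) = (x / eps x) * sF (tau x) n := by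
  unfold sF
  rw [Function.iterate_succ_apply]
  rw [Finset.prod_range_succ' (fun m => tau^[m] x / eps (tau^[m] x)) (n + 1)]
  simp only [Function.iterate_succ_apply, Function.iterate_zero_apply]
  ring

lemma recursion (x : ℚ_[p]) (hs : Summable (sF (tau x))) :
    Summable (sF x) ∧
      schneiderF' x = (fdigit (1 / eps x) : ℚ_[p]) * (x / eps x) +
        (x / eps x) * schneiderF' (tau x) := by
  have h2 : (fun n => sF x (n + 1)) = fun n => (x / eps x) * sF (tau x) n :=
    funext (sF_succ x)
  have hs2 : Summable (fun n => sF x (n + 1)) := by rw [h2]; exact hs.mul_left _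
  have hsx : Summable (sF x) := (summable_nat_add_iff 1).mp hs2
  refine ⟨hsx, ?_⟩
  rw [schneiderF', hsx.tsum_eq_zero_add]
  have h0 : sF x 0 = (fdigit (1 / eps x) : ℚ_[p]) * (x / eps x) := by
    simp [sF]
  rw [h0, h2, tsum_mul_left, schneiderF']

lemma tau_zero : tau (0 : ℚ_[p]) = 0 := by
  haveI : Fact (1 < p) := ⟨hp.1.one_lt⟩
  have h1 : fdigit (1 : ℚ_[p]) = 1 := by
    rw [fdigit, dif_pos (by norm_num : ‖(1:ℚ_[p])‖ ≤ 1)]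
    have : (⟨(1:ℚ_[p]), by norm_num⟩ : ℤ_[p]) = (1 : ℤ_[p]) := Subtype.ext rfl
    rw [this, map_one, ZMod.val_one]
  simp [tau, eps_zero, h1]

lemma sF_zero (n : ℕ) : sF (0 : ℚ_[p]) n = 0 := by
  rw [sF]
  have hfix : ∀ m : ℕ, tau^[m] (0:ℚ_[p]) = 0 := Function.iterate_fixed tau_zero
  apply mul_eq_zero_of_right
  apply Finset.prod_eq_zero (Finset.mem_range.mpr n.succ_pos)
  rw [hfix 0]
  exact zero_div _

lemma good_zero : Summable (sF (0:ℚ_[p])) ∧ schneiderF' (0:ℚ_[p]) = 0 := by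
  have h : sF (0:ℚ_[p]) = fun _ => 0 := funext sF_zero
  constructor
  · rw [h]; exact summable_zero
  · rw [schneiderF', h]; exact tsum_zero

lemma good_negp : Summable (sF (-(p:ℚ_[p]))) ∧ schneiderF' (-(p:ℚ_[p])) = -(p:ℚ_[p]) := by
  have hple : 1 ≤ p - 1 := by have := hp.1.two_le; omega
  have hplt : p - 1 < p := by have := hp.1.two_le; omega
  have hcast : ((p - 1 : ℕ) : ℚ_[p]) = (p:ℚ_[p]) - 1 := by
    push_cast [Nat.cast_sub hp.1.one_lt.le]; ring
  have hnp : ‖(-(p:ℚ_[p]))‖ ≤ (p:ℝ)⁻¹ := by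
    rw [norm_neg, Padic.norm_p]
  obtain ⟨hxn, hx0, hxe, hfd, htau⟩ := step_facts (p - 1) hple hplt 1 hnp
  have hxval : (p:ℚ_[p]) ^ (1:ℤ) / (((p-1:ℕ):ℚ_[p]) + (-(p:ℚ_[p]))) = -(p:ℚ_[p]) := by
    rw [hcast, zpow_one, show ((p:ℚ_[p]) - 1 + -(p:ℚ_[p])) = -1 by ring, div_neg, div_one]
  rw [hxval] at hxe hfd htau
  have hfix : ∀ m : ℕ, tau^[m] (-(p:ℚ_[p])) = -(p:ℚ_[p]) := Function.iterate_fixed htau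
  have hkey : ∀ n : ℕ, sF (-(p:ℚ_[p])) n = (((p-1:ℕ):ℚ_[p]) * p) * (p:ℚ_[p])^n := by
    intro n
    rw [sF]
    have : ∀ m ∈ Finset.range (n+1),
        tau^[m] (-(p:ℚ_[p])) / eps (tau^[m] (-(p:ℚ_[p]))) = (p:ℚ_[p]) := by
      intro m _
      rw [hfix m]
      rw [show (-(p:ℚ_[p])) / eps (-(p:ℚ_[p])) = (p:ℚ_[p]) from by simpa using hxe]
    rw [Finset.prod_congr rfl this, Finset.prod_const, Finset.card_range, hfix n, hfd,
      pow_succ]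
    ring
  have hgeo : Summable (fun n : ℕ => (p:ℚ_[p])^n) :=
    summable_geometric_of_norm_lt_one Padic.norm_p_lt_one
  constructor
  · rw [funext hkey]; exact hgeo.mul_left _
  · rw [schneiderF', funext hkey, tsum_mul_left,
      tsum_geometric_of_norm_lt_one Padic.norm_p_lt_one, hcast]
    have h1p : (1:ℚ_[p]) - p ≠ 0 := by
      intro h
      have h2 : (p:ℚ_[p]) = 1 := by linear_combination -h
      have h3 := Padic.norm_p_lt_one (p := p)
      rw [h2, norm_one] at h3
      exact lt_irrefl 1 h3
    field_simp
    ring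

lemma good_step (d : ℕ) (hd1 : 1 ≤ d) (hdp : d < p) (v : ℤ) {t y : ℚ_[p]}
    (ht : ‖t‖ ≤ (p:ℝ)⁻¹) (hsum : Summable (sF t)) (hval : schneiderF' t = y) :
    Summable (sF ((p:ℚ_[p])^v / ((d:ℚ_[p]) + t))) ∧
      schneiderF' ((p:ℚ_[p])^v / ((d:ℚ_[p]) + t)) =
        (d:ℚ_[p]) * (p:ℚ_[p])^v + (p:ℚ_[p])^v * y ∧
      ‖(p:ℚ_[p])^v / ((d:ℚ_[p]) + t)‖ = (p:ℝ)^(-v) := by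
  obtain ⟨hxn, hx0, hxe, hfd, htau⟩ := step_facts d hd1 hdp v ht
  have hsum' : Summable (sF (tau ((p:ℚ_[p])^v / ((d:ℚ_[p]) + t)))) := by rw [htau]; exact hsum
  obtain ⟨hS, hR⟩ := recursion _ hsum'
  refine ⟨hS, ?_, hxn⟩
  rw [hR, hfd, hxe, htau, hval]

lemma good_pos (m : ℕ) : ∀ v : ℤ, ∃ q : ℚ, Summable (sF ((q:ℚ_[p]))) ∧
    schneiderF' ((q:ℚ_[p])) = (m:ℚ_[p]) * (p:ℚ_[p])^v ∧ ‖((q:ℚ_[p]))‖ ≤ (p:ℝ)^(-v) := by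
  induction m using Nat.strong_induction_on with
  | _ m ih =>
    intro v
    rcases Nat.eq_zero_or_pos m with hm | hm
    · refine ⟨0, ?_, ?_, ?_⟩
      · simpa using good_zero.1
      · subst hm; simpa using good_zero.2
      · simp [le_of_lt (zpow_pos p_posR _)]
    · have hdlt : m % p < p := Nat.mod_lt m hp.1.pos
      have hqlt : m / p < m := Nat.div_lt_self hm hp.1.one_lt
      rcases Nat.eq_zero_or_pos (m % p) with hd | hd
      · obtain ⟨q, h1, h2, h3⟩ := ih (m / p) hqlt (v + 1)
        refine ⟨q, h1, ?_, ?_⟩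
        · rw [h2]
          have hm' : (m:ℚ_[p]) = (p:ℚ_[p]) * ((m / p : ℕ):ℚ_[p]) := by
            have h := congrArg (Nat.cast : ℕ → ℚ_[p])
              (Nat.div_mul_cancel (Nat.dvd_of_mod_eq_zero hd))
            push_cast at h
            rw [← h]; ring
          rw [hm', zpow_add₀ hpQ, zpow_one]; ring
        · exact h3.trans (zpow_le_zpow_right₀ one_lt_pR.le (by omega))
      · obtain ⟨q, h1, h2, h3⟩ := ih (m / p) hqlt 1
        have ht : ‖(q:ℚ_[p])‖ ≤ (p:ℝ)⁻¹ := by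
          simpa [zpow_neg, zpow_one] using h3
        obtain ⟨hS, hV, hN⟩ := good_step (m % p) hd hdlt v ht h1 h2
        have hc : (((p:ℚ)^v / ((m % p : ℕ) + q) : ℚ) : ℚ_[p])
            = (p:ℚ_[p])^v / (((m % p : ℕ):ℚ_[p]) + (q:ℚ_[p])) := by
          push_cast
          ring
        refine ⟨(p:ℚ)^v / ((m % p : ℕ) + q), ?_, ?_, ?_⟩
        · rw [hc]; exact hS
        · rw [hc, hV]
          have hmod : (m:ℚ_[p]) = ((m % p : ℕ):ℚ_[p]) + (p:ℚ_[p]) * ((m / p : ℕ):ℚ_[p]) := by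
            exact_mod_cast congrArg (Nat.cast : ℕ → ℚ_[p]) (Nat.mod_add_div m p).symm
          rw [hmod, zpow_one]
          ring
        · rw [hc, hN]

lemma good_neg (n : ℕ) : 1 ≤ n → ∀ v : ℤ, ∃ q : ℚ, Summable (sF ((q:ℚ_[p]))) ∧
    schneiderF' ((q:ℚ_[p])) = -((n:ℚ_[p]) * (p:ℚ_[p])^v) ∧ ‖((q:ℚ_[p]))‖ ≤ (p:ℝ)^(-v) := by
  induction n using Nat.strong_induction_on with
  | _ n ih =>
    intro hn v
    have hp2 := hp.1.two_le
    have hcast : ((p - 1 : ℕ) : ℚ_[p]) = (p:ℚ_[p]) - 1 := by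
      push_cast [Nat.cast_sub hp.1.one_lt.le]; ring
    rcases eq_or_lt_of_le hn with h1 | h1
    · -- n = 1 : use x = -p^v
      have hnp : ‖(-(p:ℚ_[p]))‖ ≤ (p:ℝ)⁻¹ := by rw [norm_neg, Padic.norm_p]
      obtain ⟨hS, hV, hN⟩ := good_step (p - 1) (by omega) (by omega) v hnp
        good_negp.1 good_negp.2
      have hx : (p:ℚ_[p])^v / (((p-1:ℕ):ℚ_[p]) + (-(p:ℚ_[p]))) = -(p:ℚ_[p])^v := by
        rw [hcast, show ((p:ℚ_[p]) - 1 + -(p:ℚ_[p])) = -1 by ring, div_neg, div_one]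
      have hc : ((-((p:ℚ)^v) : ℚ) : ℚ_[p]) = -(p:ℚ_[p])^v := by push_cast; ring
      refine ⟨-((p:ℚ)^v), ?_, ?_, ?_⟩
      · rw [hc, ← hx]; exact hS
      · rw [hc, ← hx, hV, hcast, ← h1]
        push_cast
        ring
      · rw [hc, ← hx, hN]
    · -- n ≥ 2
      have hdlt : n % p < p := Nat.mod_lt n hp.1.pos
      rcases Nat.eq_zero_or_pos (n % p) with hd | hd
      · have hq1 : 1 ≤ n / p := Nat.one_le_div_iff hp.1.pos |>.mpr
          (Nat.le_of_dvd (by omega) (Nat.dvd_of_mod_eq_zero hd))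
        have hqlt : n / p < n := Nat.div_lt_self (by omega) hp.1.one_lt
        obtain ⟨q, h1', h2, h3⟩ := ih (n / p) hqlt hq1 (v + 1)
        refine ⟨q, h1', ?_, ?_⟩
        · rw [h2]
          have hm' : (n:ℚ_[p]) = (p:ℚ_[p]) * ((n / p : ℕ):ℚ_[p]) := by
            have h := congrArg (Nat.cast : ℕ → ℚ_[p])
              (Nat.div_mul_cancel (Nat.dvd_of_mod_eq_zero hd))
            push_cast at h
            rw [← h]; ring
          rw [hm', zpow_add₀ hpQ, zpow_one]; ring
        · exact h3.trans (zpow_le_zpow_right₀ one_lt_pR.le (by omega))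
      · set d := p - n % p with hddef
        set n'' := n / p + 1 with hn''def
        have hdl : 1 ≤ d := by omega
        have hdp' : d < p := by omega
        have hlt : n'' < n := by
          have hmad : n % p + p * (n / p) = n := Nat.mod_add_div n p
          rcases Nat.eq_zero_or_pos (n / p) with h0 | h0
          · rw [h0, Nat.mul_zero] at hmad
            omega
          · have h2' : 2 * (n / p) ≤ p * (n / p) := Nat.mul_le_mul_right _ hp2
            generalize hg : p * (n / p) = C at hmad h2'
            omega
        obtain ⟨q, h1', h2, h3⟩ := ih n'' hlt (Nat.succ_pos _) 1
        have ht : ‖(q:ℚ_[p])‖ ≤ (p:ℝ)⁻¹ := by simpa [zpow_neg, zpow_one] using h3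
        obtain ⟨hS, hV, hN⟩ := good_step d hdl hdp' v ht h1' h2
        have hc : (((p:ℚ)^v / ((d:ℕ) + q) : ℚ) : ℚ_[p])
            = (p:ℚ_[p])^v / (((d:ℕ):ℚ_[p]) + (q:ℚ_[p])) := by push_cast; ring
        refine ⟨(p:ℚ)^v / ((d:ℕ) + q), ?_, ?_, ?_⟩
        · rw [hc]; exact hS
        · rw [hc, hV, zpow_one]
          have hdc : ((d:ℕ):ℚ_[p]) = (p:ℚ_[p]) - ((n % p : ℕ):ℚ_[p]) := by
            rw [hddef]
            push_cast [Nat.cast_sub hdlt.le]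
            ring
          have hnc : (n:ℚ_[p]) = ((n % p : ℕ):ℚ_[p]) + (p:ℚ_[p]) * ((n / p : ℕ):ℚ_[p]) := by
            exact_mod_cast congrArg (Nat.cast : ℕ → ℚ_[p]) (Nat.mod_add_div n p).symm
          have hn''c : ((n'':ℕ):ℚ_[p]) = ((n / p : ℕ):ℚ_[p]) + 1 := by
            rw [hn''def]; push_cast; ring
          rw [hdc, hn''c, hnc]
          ring
        · rw [hc, hN]

end Aux

theorem schneiderF_rat_surj (p : ℕ) [Fact p.Prime] (a : ℤ) (k : ℕ) :
    ∃ x : ℚ, schneiderF ((x : ℚ_[p])) = (a : ℚ_[p]) / (p : ℚ_[p]) ^ k := by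
  have hsch : ∀ x : ℚ_[p], schneiderF x = schneiderF' x := fun _ => rfl
  have hpk : ((p:ℚ_[p]) ^ k)⁻¹ = (p:ℚ_[p]) ^ (-(k:ℤ)) := by
    rw [zpow_neg, zpow_natCast]
  rcases le_or_gt 0 a with ha | ha
  · obtain ⟨q, _, h2, _⟩ := good_pos (p := p) a.toNat (-(k:ℤ))
    refine ⟨q, ?_⟩
    have hna : ((a.toNat : ℕ) : ℚ_[p]) = (a : ℚ_[p]) := by
      exact_mod_cast congrArg (Int.cast : ℤ → ℚ_[p]) (Int.toNat_of_nonneg ha)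
    rw [hsch, h2, hna, div_eq_mul_inv, hpk]
  · obtain ⟨q, _, h2, _⟩ := good_neg (p := p) a.natAbs (by omega) (-(k:ℤ))
    refine ⟨q, ?_⟩
    have hna : ((a.natAbs : ℕ) : ℚ_[p]) = -(a : ℚ_[p]) := by
      have h : (a.natAbs : ℤ) = -a := by omega
      have h2 : ((a.natAbs : ℕ) : ℚ_[p]) = ((-a : ℤ) : ℚ_[p]) := by
        rw [← h]; exact (Int.cast_natCast _).symm
      simpa using h2
    rw [hsch, h2, hna, div_eq_mul_inv, hpk]
    ring
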